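/- If K and L are disjoint simplicial complexes each having at least one edge, then the Morse complex of the disjoint union K ⊔ L equals the join M(K) * M(L) of the Morse complexes. -/

import Mathlib

open Finset

/-- An abstract simplicial complex on vertex type `V`. -/
structure SComplex (V : Type*) where
  faces : Finset V → Prop
  not_empty : ¬ faces ∅
  down_closed : ∀ {σ τ : Finset V}, faces τ → σ ⊆ τ → σ.Nonempty → faces σ

/-- The complex generated by a set of simplices (downward closure). -/
def ofGens {V : Type*} (gens : Set (Finset V)) : SComplex V where
  faces σ := σ.Nonempty ∧ ∃ τ ∈ gens, σ ⊆ τ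
  not_empty h := by simpa using h.1
  down_closed := by
    rintro σ τ ⟨-, τ', hτ', hsub'⟩ hsub hne
    exact ⟨hne, τ', hτ', hsub.trans hsub'⟩

/-- A primitive (gradient) vector field on `K`: a single regular pair `(σ, τ)`
with `σ` a codimension-one face of `τ`. -/
structure VPair {V : Type*} (K : SComplex V) where
  lo : Finset V
  hi : Finset V
  lo_face : K.faces lo
  hi_face : K.faces hi
  lo_sub : lo ⊆ hi
  card_eq : hi.card = lo.card + 1

noncomputable instance {V : Type*} (K : SComplex V) : DecidableEq (VPair K) :=
  Classical.decEq _

/-- Two primitive pairs share no simplex. -/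
def VPair.Compatible {V : Type*} {K : SComplex V} (p q : VPair K) : Prop :=
  p.lo ≠ q.lo ∧ p.lo ≠ q.hi ∧ p.hi ≠ q.lo ∧ p.hi ≠ q.hi

/-- A discrete vector field: each simplex occurs in at most one pair. -/
def IsDVF {V : Type*} {K : SComplex V} (W : Set (VPair K)) : Prop :=
  ∀ p ∈ W, ∀ q ∈ W, p ≠ q → VPair.Compatible p q

/-- Existence of a nontrivial closed `V`-path. -/
def HasClosedPath {V : Type*} {K : SComplex V} (W : Set (VPair K)) : Prop :=
  ∃ k : ℕ, 0 < k ∧ ∃ c : ZMod k → VPair K, (∀ i, c i ∈ W) ∧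
    ∀ i, (c (i + 1)).lo ⊆ (c i).hi ∧ (c (i + 1)).lo ≠ (c i).lo ∧
      (c (i + 1)).lo.card + 1 = (c i).hi.card

/-- A gradient vector field: a discrete vector field with no nontrivial closed path. -/
def IsGVF {V : Type*} {K : SComplex V} (W : Set (VPair K)) : Prop :=
  IsDVF W ∧ ¬ HasClosedPath W

/-- The Morse complex of `K`: vertices are primitive gradient vector fields,
simplices are gradient vector fields. -/
def MorseComplex {V : Type*} (K : SComplex V) : SComplex (VPair K) where
  faces S := S.Nonempty ∧ IsGVF {p | p ∈ S}
  not_empty h := by simpa using h.1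
  down_closed := by
    rintro σ τ ⟨hne', hdvf, hnc⟩ hsub hne
    refine ⟨hne, fun p hp q hq hpq => hdvf p (hsub hp) q (hsub hq) hpq, fun h => hnc ?_⟩
    obtain ⟨k, hk, c, hc, hpath⟩ := h
    exact ⟨k, hk, c, fun i => hsub (hc i), hpath⟩

/-- The pure Morse complex: the subcomplex of `MorseComplex K` generated by the
facets of maximum dimension (maximum gradient vector fields). -/
def pureMorse {V : Type*} (K : SComplex V) : SComplex (VPair K) where
  faces S := (MorseComplex K).faces S ∧ ∃ T : Finset (VPair K), S ⊆ T ∧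
      (MorseComplex K).faces T ∧
      ∀ T' : Finset (VPair K), (MorseComplex K).faces T' → T'.card ≤ T.card
  not_empty h := (MorseComplex K).not_empty h.1
  down_closed := by
    rintro σ τ ⟨hτ, T, hsub', hT, hmax⟩ hsub hne
    exact ⟨(MorseComplex K).down_closed hτ hsub hne, T, hsub.trans hsub', hT, hmax⟩

/-- `σ` is a facet (maximal simplex) of `K`. -/
def IsFacet {V : Type*} (K : SComplex V) (σ : Finset V) : Prop :=
  K.faces σ ∧ ∀ τ, K.faces τ → σ ⊆ τ → σ = τ

/-- `w` dominates `w'`: every facet containing `w'` contains `w`. -/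
def Dominates {V : Type*} (K : SComplex V) (w w' : V) : Prop :=
  ∀ σ, IsFacet K σ → w' ∈ σ → w ∈ σ

/-- `K` is minimal: no vertex dominates another vertex. -/
def MinimalComplex {V : Type*} (K : SComplex V) : Prop :=
  ∀ w w' : V, K.faces {w} → K.faces {w'} → w ≠ w' → ¬ Dominates K w w'

/-- Strong collapsibility of a face predicate: a sequence of removals of
dominated vertices reaching a single point. -/
inductive SCAux {V : Type*} : (Finset V → Prop) → Prop
  | point (F : Finset V → Prop) (v : V) (h : ∀ σ, F σ ↔ σ = {v}) : SCAux F
  | step (F : Finset V → Prop) (w w' : V) (hne : w ≠ w') (hw : F {w}) (hw' : F {w'})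
      (hdom : ∀ σ, (F σ ∧ ∀ τ, F τ → σ ⊆ τ → σ = τ) → w' ∈ σ → w ∈ σ)
      (h : SCAux (fun σ => F σ ∧ w' ∉ σ)) : SCAux F

def StronglyCollapsible {V : Type*} (K : SComplex V) : Prop := SCAux K.faces

/-- `F` strongly collapses to `G` by a sequence of removals of dominated vertices. -/
inductive SCTo {V : Type*} : (Finset V → Prop) → (Finset V → Prop) → Prop
  | refl (F : Finset V → Prop) : SCTo F F
  | step (F G : Finset V → Prop) (w w' : V) (hne : w ≠ w') (hw : F {w}) (hw' : F {w'})
      (hdom : ∀ σ, (F σ ∧ ∀ τ, F τ → σ ⊆ τ → σ = τ) → w' ∈ σ → w ∈ σ)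
      (h : SCTo (fun σ => F σ ∧ w' ∉ σ) G) : SCTo F G

/-- Collapsibility (Forman): removal of free pairs down to a point. -/
inductive CollAux {V : Type*} : (Finset V → Prop) → Prop
  | point (F : Finset V → Prop) (v : V) (h : ∀ σ, F σ ↔ σ = {v}) : CollAux F
  | step (F : Finset V → Prop) (σ τ : Finset V) (hστ : σ ⊂ τ) (hσ : F σ) (hτ : F τ)
      (hfree : ∀ ρ, F ρ → σ ⊂ ρ → ρ = τ)
      (h : CollAux (fun ρ => F ρ ∧ ρ ≠ σ ∧ ρ ≠ τ)) : CollAux F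

def Collapsible {V : Type*} (K : SComplex V) : Prop := CollAux K.faces

/-- The degree of a vertex: the number of edges of `K` containing it. -/
noncomputable def sdeg {V : Type*} (K : SComplex V) (x : V) : ℕ :=
  Set.ncard {σ : Finset V | K.faces σ ∧ σ.card = 2 ∧ x ∈ σ}

/-- Image of a finset, with a classical decidability instance. -/
noncomputable def fimage {V W : Type*} (f : V → W) (σ : Finset V) : Finset W :=
  haveI := Classical.decEq W
  σ.image f

/-- An isomorphism between two simplicial complexes given by face predicates. -/
structure ComplexIso {V W : Type*} (F : Finset V → Prop) (G : Finset W → Prop) where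
  toFun : V → W
  invFun : W → V
  left_inv : ∀ x, F {x} → invFun (toFun x) = x
  right_inv : ∀ y, G {y} → toFun (invFun y) = y
  map_face : ∀ σ, F σ → G (fimage toFun σ)
  inv_face : ∀ τ, G τ → F (fimage invFun τ)

/-- The join of two simplicial complexes. -/
def sJoin {V W : Type*} [DecidableEq V] [DecidableEq W] (K : SComplex V) (L : SComplex W) :
    SComplex (V ⊕ W) :=
  ofGens {σ | ∃ α β, (K.faces α ∨ α = ∅) ∧ (L.faces β ∨ β = ∅) ∧
    σ = α.image Sum.inl ∪ β.image Sum.inr}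

/-- The disjoint union of two simplicial complexes. -/
def sDisjUnion {V W : Type*} [DecidableEq V] [DecidableEq W] (K : SComplex V) (L : SComplex W) :
    SComplex (V ⊕ W) :=
  ofGens ({σ | ∃ α, K.faces α ∧ σ = α.image Sum.inl} ∪
          {σ | ∃ β, L.faces β ∧ σ = β.image Sum.inr})

/-- The simplicial complex of a simple graph (vertices and edges). -/
def graphComplex {V : Type*} [DecidableEq V] (G : SimpleGraph V) : SComplex V :=
  ofGens ({σ | ∃ x, σ = {x}} ∪ {σ | ∃ x y, G.Adj x y ∧ σ = ({x, y} : Finset V)})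

/-- Attach a leaf (pendant edge) to `K` at the vertex `x`. -/
def attachLeaf {V : Type*} [DecidableEq V] (K : SComplex V) (x : V) : SComplex (V ⊕ Unit) :=
  ofGens ({σ | ∃ α, K.faces α ∧ σ = α.image Sum.inl} ∪
          {({Sum.inl x, Sum.inr ()} : Finset (V ⊕ Unit))})

/-- The cycle graph on `ZMod n`. -/
def cycleGraph (n : ℕ) : SimpleGraph (ZMod n) :=
  SimpleGraph.fromRel (fun i j => j = i + 1)

/-- Attach one new leaf to every vertex of a graph. -/
def addLeaves {V : Type*} [DecidableEq V] (G : SimpleGraph V) : SComplex (V ⊕ V) :=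
  ofGens ({σ | ∃ x y, G.Adj x y ∧ σ = ({Sum.inl x, Sum.inl y} : Finset (V ⊕ V))} ∪
          {σ | ∃ u, σ = ({Sum.inl u, Sum.inr u} : Finset (V ⊕ V))})

/-- The geometric realization of `K`, inside `V → ℝ`. -/
def realization {V : Type*} (K : SComplex V) : Set (V → ℝ) :=
  {f | ∃ σ, K.faces σ ∧ (∀ x, 0 ≤ f x) ∧ (∀ x, f x ≠ 0 → x ∈ σ) ∧ ∑ x ∈ σ, f x = 1}

/-- A Hasse-diagram edge of a poset: a covering pair. -/
structure HEdge (P : Type*) [PartialOrder P] where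
  lo : P
  hi : P
  cov : lo ⋖ hi

noncomputable instance {P : Type*} [PartialOrder P] : DecidableEq (HEdge P) :=
  Classical.decEq _

def HEdge.Compat {P : Type*} [PartialOrder P] (p q : HEdge P) : Prop :=
  p.lo ≠ q.lo ∧ p.lo ≠ q.hi ∧ p.hi ≠ q.lo ∧ p.hi ≠ q.hi

def HasPosetCycle {P : Type*} [PartialOrder P] (W : Set (HEdge P)) : Prop :=
  ∃ k : ℕ, 0 < k ∧ ∃ c : ZMod k → HEdge P, (∀ i, c i ∈ W) ∧
    ∀ i, (c (i + 1)).lo ⋖ (c i).hi ∧ (c (i + 1)).lo ≠ (c i).lo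

/-- The generalized Morse complex `f(P)` of a poset: simplices are acyclic
matchings of the Hasse diagram of `P`. -/
def genMorse (P : Type*) [PartialOrder P] : SComplex (HEdge P) where
  faces S := S.Nonempty ∧ (∀ p ∈ S, ∀ q ∈ S, p ≠ q → HEdge.Compat p q) ∧
    ¬ HasPosetCycle {p | p ∈ S}
  not_empty h := by simpa using h.1
  down_closed := by
    rintro σ τ ⟨-, hm, hc⟩ hsub hne
    refine ⟨hne, fun p hp q hq h => hm p (hsub hp) q (hsub hq) h, fun h => hc ?_⟩
    obtain ⟨k, hk, c, hc', hp⟩ := h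
    exact ⟨k, hk, c, fun i => hsub (hc' i), hp⟩

/-- The automorphism group of a simplicial complex, as a subgroup of `Perm V`. -/
def autGroup {V : Type*} [DecidableEq V] (K : SComplex V) : Subgroup (Equiv.Perm V) where
  carrier := {e | ∀ σ : Finset V, K.faces σ ↔ K.faces (σ.image e)}
  one_mem' := by intro σ; simp
  mul_mem' := by
    intro a b ha hb σ
    rw [hb σ, ha (σ.image b)]
    simp [Finset.image_image, Equiv.Perm.coe_mul]
  inv_mem' := by
    intro a ha σ
    have := ha (σ.image ⇑a⁻¹)
    simpa [Finset.image_image, Function.comp_def,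
      Finset.image_id'] using this.symm

/-- The full subcomplex of `K` on a set `S` of vertices. -/
def restrictTo {V : Type*} (K : SComplex V) (S : Set V) : Finset V → Prop :=
  fun σ => K.faces σ ∧ ∀ x ∈ σ, x ∈ S

/-- `S` spans a fully connected subcomplex: `K = (K∣S) * (K∣Sᶜ)`. -/
def FullyConnected {V : Type*} [DecidableEq V] (K : SComplex V) (S : Set V) : Prop :=
  ∀ σ : Finset V, K.faces σ ↔ (σ.Nonempty ∧ ∃ α β : Finset V,
    (restrictTo K S α ∨ α = ∅) ∧ ((K.faces β ∧ ∀ x ∈ β, x ∉ S) ∨ β = ∅) ∧ σ = α ∪ β)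

/-- The primitive pair `(x, xy)` on an edge `{x,y}`. -/
def edgePair {V : Type*} [DecidableEq V] (K : SComplex V) (x y : V) (hxy : x ≠ y)
    (h : K.faces {x, y}) : VPair K where
  lo := {x}
  hi := {x, y}
  lo_face := K.down_closed h (by simp) (Finset.singleton_nonempty x)
  hi_face := h
  lo_sub := by simp
  card_eq := by
    rw [Finset.card_singleton, Finset.card_insert_of_notMem (by simp [hxy]),
      Finset.card_singleton]

/-!
A primitive pair of `K ⊔ L` lies entirely in `K` or entirely in `L`, so the vertices of
`M(K ⊔ L)` are in bijection with `VPair K ⊕ VPair L`. Pairs from different components share no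
simplex, and a closed `V`-path cannot cross from one component to the other, because
consecutive pairs share a nonempty simplex. Hence a set of pairs is a gradient vector field
exactly when its `K`-part and its `L`-part are, which is the description of a simplex of the
join `M(K) * M(L)`.
-/

open Function

lemma SComplex.nonempty_of_faces {V : Type*} (K : SComplex V) {σ : Finset V} (h : K.faces σ) :
    σ.Nonempty :=
  Finset.nonempty_iff_ne_empty.2 fun he => K.not_empty (he ▸ h)

lemma SComplex.faces_or_eq_empty_of_subset {V : Type*} (K : SComplex V) {σ τ : Finset V}
    (hτ : K.faces τ ∨ τ = ∅) (hστ : σ ⊆ τ) : K.faces σ ∨ σ = ∅ := by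
  rcases σ.eq_empty_or_nonempty with hσ | hσ
  · exact .inr hσ
  · rcases hτ with hτ | rfl
    · exact .inl (K.down_closed hτ hστ hσ)
    · exact .inr (Finset.subset_empty.1 hστ)

lemma ZMod.forall_iff_of_succ_iff {k : ℕ} {P : ZMod k → Prop} (h : ∀ i, P (i + 1) ↔ P i) :
    ∀ i, P i ↔ P 0 := by
  intro i
  obtain ⟨n, rfl⟩ := ZMod.intCast_surjective i
  induction n using Int.induction_on with
  | zero => simp
  | succ n ih => rw [Int.cast_add, Int.cast_one, h]; exact ih
  | pred n ih => rw [← ih, ← h, Int.cast_sub, Int.cast_one, sub_add_cancel]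

lemma Finset.not_map_subset_map_of_ne {α β γ : Type*} {f : α ↪ γ} {g : β ↪ γ}
    (hfg : ∀ x y, f x ≠ g y) {s : Finset α} (hs : s.Nonempty) (t : Finset β) :
    ¬ s.map f ⊆ t.map g := by
  obtain ⟨x, hx⟩ := hs
  intro h
  obtain ⟨y, -, hy⟩ := Finset.mem_map.1 (h (Finset.mem_map_of_mem f hx))
  exact hfg x y hy.symm

lemma Finset.map_ne_map_of_ne {α β γ : Type*} {f : α ↪ γ} {g : β ↪ γ}
    (hfg : ∀ x y, f x ≠ g y) {s : Finset α} (hs : s.Nonempty) (t : Finset β) :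
    s.map f ≠ t.map g :=
  fun h => Finset.not_map_subset_map_of_ne hfg hs t h.le

lemma HasClosedPath.mono {V : Type*} {K : SComplex V} {W W' : Set (VPair K)} (h : W ⊆ W') :
    HasClosedPath W → HasClosedPath W' := by
  rintro ⟨k, hk, c, hc, hstep⟩
  exact ⟨k, hk, c, fun i => h (hc i), hstep⟩

namespace VPair

variable {V : Type*} {K : SComplex V}

/-- The relation between consecutive pairs of a closed path in `HasClosedPath`. -/
def Step (p q : VPair K) : Prop :=
  q.lo ⊆ p.hi ∧ q.lo ≠ p.lo ∧ q.lo.card + 1 = p.hi.card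

lemma ext {p q : VPair K} (hlo : p.lo = q.lo) (hhi : p.hi = q.hi) : p = q := by
  cases p; cases q; simp_all

section Map

variable {V' V'' : Type*} {K' : SComplex V'} {K'' : SComplex V''}
  (f : V ↪ V') (hf : ∀ σ, K.faces σ → K'.faces (σ.map f))
  (g : V'' ↪ V') (hg : ∀ σ, K''.faces σ → K'.faces (σ.map g))

def map (p : VPair K) : VPair K' where
  lo := p.lo.map f
  hi := p.hi.map f
  lo_face := hf _ p.lo_face
  hi_face := hf _ p.hi_face
  lo_sub := Finset.map_subset_map.2 p.lo_sub
  card_eq := by simp [p.card_eq]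

lemma map_injective : Injective (map f hf) := by
  intro p q h
  exact VPair.ext (Finset.map_injective f (congrArg lo h)) (Finset.map_injective f (congrArg hi h))

lemma compatible_map_iff {p q : VPair K} :
    Compatible (map f hf p) (map f hf q) ↔ Compatible p q := by
  simp only [Compatible, map, ne_eq, Finset.map_inj]

lemma step_map_iff {p q : VPair K} : Step (map f hf p) (map f hf q) ↔ Step p q := by
  simp only [Step, map, ne_eq, Finset.map_subset_map, Finset.map_inj, Finset.card_map]

lemma mem_range_map_of_hi_subset (p : VPair K') {σ : Finset V} (hσ : K.faces σ)
    (h : p.hi ⊆ σ.map f) : p ∈ Set.range (map f hf) := by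
  obtain ⟨hi, hhi, hphi⟩ := Finset.subset_map_iff.1 h
  have hlo_sub := p.lo_sub
  rw [hphi] at hlo_sub
  obtain ⟨lo, hlo, hplo⟩ := Finset.subset_map_iff.1 hlo_sub
  have hlo_ne : lo.Nonempty := Finset.map_nonempty.1 (hplo ▸ K'.nonempty_of_faces p.lo_face)
  have hhi_face : K.faces hi := K.down_closed hσ hhi (hlo_ne.mono hlo)
  refine ⟨⟨lo, hi, K.down_closed hhi_face hlo hlo_ne, hhi_face, hlo, ?_⟩, ?_⟩
  · simpa [hplo, hphi] using p.card_eq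
  · exact VPair.ext hplo.symm hphi.symm

lemma hasClosedPath_preimage_map_iff (W : Set (VPair K')) :
    HasClosedPath (map f hf ⁻¹' W) ↔ HasClosedPath (W ∩ Set.range (map f hf)) := by
  constructor
  · rintro ⟨k, hk, c, hc, hstep⟩
    exact ⟨k, hk, map f hf ∘ c, fun i => ⟨hc i, c i, rfl⟩,
      fun i => (step_map_iff f hf).2 (hstep i)⟩
  · rintro ⟨k, hk, c, hc, hstep⟩
    choose d hd using fun i => (hc i).2
    refine ⟨k, hk, d, fun i => by simpa [hd i] using (hc i).1, fun i => ?_⟩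
    exact (step_map_iff f hf).1 (by rw [hd, hd]; exact hstep i)

lemma isDVF_preimage_map {W : Set (VPair K')} (hW : IsDVF W) : IsDVF (map f hf ⁻¹' W) :=
  fun _ hp _ hq hpq => (compatible_map_iff f hf).1 (hW _ hp _ hq ((map_injective f hf).ne hpq))

variable {f g}

lemma compatible_map_map (hfg : ∀ x y, f x ≠ g y) (p : VPair K) (q : VPair K'') :
    Compatible (map f hf p) (map g hg q) := by
  have hlo := K.nonempty_of_faces p.lo_face
  have hhi := K.nonempty_of_faces p.hi_face
  exact ⟨Finset.map_ne_map_of_ne hfg hlo _, Finset.map_ne_map_of_ne hfg hlo _,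
    Finset.map_ne_map_of_ne hfg hhi _, Finset.map_ne_map_of_ne hfg hhi _⟩

lemma not_step_map_map (hfg : ∀ x y, f x ≠ g y) (p : VPair K) (q : VPair K'') :
    ¬ Step (map f hf p) (map g hg q) :=
  fun h => Finset.not_map_subset_map_of_ne (fun x y => (hfg y x).symm)
    (K''.nonempty_of_faces q.lo_face) _ h.1

end Map

end VPair

section DisjUnion

variable {V W : Type*} [DecidableEq V] [DecidableEq W] (K : SComplex V) (L : SComplex W)

lemma sDisjUnion_faces_map_inl {σ : Finset V} (hσ : K.faces σ) :
    (sDisjUnion K L).faces (σ.map .inl) :=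
  ⟨(K.nonempty_of_faces hσ).map, _, .inl ⟨σ, hσ, rfl⟩, (Finset.map_eq_image _ _).le⟩

lemma sDisjUnion_faces_map_inr {σ : Finset W} (hσ : L.faces σ) :
    (sDisjUnion K L).faces (σ.map .inr) :=
  ⟨(L.nonempty_of_faces hσ).map, _, .inr ⟨σ, hσ, rfl⟩, (Finset.map_eq_image _ _).le⟩

namespace VPair

def disjUnionInl : VPair K → VPair (sDisjUnion K L) :=
  map .inl fun _ => sDisjUnion_faces_map_inl K L

def disjUnionInr : VPair L → VPair (sDisjUnion K L) :=
  map .inr fun _ => sDisjUnion_faces_map_inr K L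

variable {K L}

lemma disjUnionInl_ne_disjUnionInr (q : VPair K) (r : VPair L) :
    disjUnionInl K L q ≠ disjUnionInr K L r :=
  fun h => (compatible_map_map _ _ (fun _ _ => Sum.inl_ne_inr) q r).1 (congrArg lo h)

lemma mem_range_disjUnionInl_or_disjUnionInr (p : VPair (sDisjUnion K L)) :
    p ∈ Set.range (disjUnionInl K L) ∨ p ∈ Set.range (disjUnionInr K L) := by
  obtain ⟨-, τ, ⟨α, hα, rfl⟩ | ⟨β, hβ, rfl⟩, hsub⟩ := p.hi_face
  · exact .inl (mem_range_map_of_hi_subset _ _ p hα (by rwa [Finset.map_eq_image]))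
  · exact .inr (mem_range_map_of_hi_subset _ _ p hβ (by rwa [Finset.map_eq_image]))

variable (K L) in
noncomputable def disjUnionEquiv : VPair K ⊕ VPair L ≃ VPair (sDisjUnion K L) :=
  Equiv.ofBijective (Sum.elim (disjUnionInl K L) (disjUnionInr K L))
    ⟨(map_injective _ _).sumElim (map_injective _ _) disjUnionInl_ne_disjUnionInr, fun p => by
      rcases mem_range_disjUnionInl_or_disjUnionInr p with ⟨q, rfl⟩ | ⟨r, rfl⟩
      exacts [⟨.inl q, rfl⟩, ⟨.inr r, rfl⟩]⟩

lemma isDVF_sDisjUnion_iff (S : Set (VPair (sDisjUnion K L))) :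
    IsDVF S ↔ IsDVF (disjUnionInl K L ⁻¹' S) ∧ IsDVF (disjUnionInr K L ⁻¹' S) := by
  refine ⟨fun h => ⟨isDVF_preimage_map _ _ h, isDVF_preimage_map _ _ h⟩, ?_⟩
  rintro ⟨hl, hr⟩ p hp p' hp' hpp'
  rcases mem_range_disjUnionInl_or_disjUnionInr p with ⟨q, rfl⟩ | ⟨r, rfl⟩ <;>
    rcases mem_range_disjUnionInl_or_disjUnionInr p' with ⟨q', rfl⟩ | ⟨r', rfl⟩
  · exact (compatible_map_iff _ _).2 (hl q hp q' hp' (ne_of_apply_ne _ hpp'))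
  · exact compatible_map_map _ _ (fun _ _ => Sum.inl_ne_inr) q r'
  · exact compatible_map_map _ _ (fun _ _ => Sum.inr_ne_inl) r q'
  · exact (compatible_map_iff _ _).2 (hr r hp r' hp' (ne_of_apply_ne _ hpp'))

lemma mem_range_disjUnionInl_iff_of_step {p q : VPair (sDisjUnion K L)} (h : Step p q) :
    q ∈ Set.range (disjUnionInl K L) ↔ p ∈ Set.range (disjUnionInl K L) := by
  rcases mem_range_disjUnionInl_or_disjUnionInr p with ⟨a, rfl⟩ | ⟨b, rfl⟩ <;>
    rcases mem_range_disjUnionInl_or_disjUnionInr q with ⟨a', rfl⟩ | ⟨b', rfl⟩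
  · simp
  · exact absurd h (not_step_map_map _ _ (fun _ _ => Sum.inl_ne_inr) a b')
  · exact absurd h (not_step_map_map _ _ (fun _ _ => Sum.inr_ne_inl) b a')
  · simp only [Set.mem_range, disjUnionInl_ne_disjUnionInr, exists_false]

lemma hasClosedPath_sDisjUnion_iff (S : Set (VPair (sDisjUnion K L))) :
    HasClosedPath S ↔
      HasClosedPath (disjUnionInl K L ⁻¹' S) ∨ HasClosedPath (disjUnionInr K L ⁻¹' S) := by
  refine ⟨fun ⟨k, hk, c, hc, hstep⟩ => ?_, ?_⟩
  · have hside := ZMod.forall_iff_of_succ_iff (P := fun i => c i ∈ Set.range (disjUnionInl K L))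
      fun i => mem_range_disjUnionInl_iff_of_step (hstep i)
    by_cases h0 : c 0 ∈ Set.range (disjUnionInl K L)
    · refine .inl ((hasClosedPath_preimage_map_iff _ _ S).2 ⟨k, hk, c, fun i => ?_, hstep⟩)
      exact ⟨hc i, (hside i).2 h0⟩
    · refine .inr ((hasClosedPath_preimage_map_iff _ _ S).2 ⟨k, hk, c, fun i => ?_, hstep⟩)
      exact ⟨hc i, (mem_range_disjUnionInl_or_disjUnionInr (c i)).resolve_left (by rwa [hside])⟩
  · rintro (h | h)
    exacts [((hasClosedPath_preimage_map_iff _ _ S).1 h).mono Set.inter_subset_left,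
      ((hasClosedPath_preimage_map_iff _ _ S).1 h).mono Set.inter_subset_left]

variable (K L) in
lemma preimage_disjUnionInl_map_disjUnionEquiv (T : Finset (VPair K ⊕ VPair L)) :
    disjUnionInl K L ⁻¹' ↑(T.map (disjUnionEquiv K L).toEmbedding) = ↑T.toLeft := by
  ext q
  exact (Finset.mem_map' (disjUnionEquiv K L).toEmbedding).trans Finset.mem_toLeft.symm

variable (K L) in
lemma preimage_disjUnionInr_map_disjUnionEquiv (T : Finset (VPair K ⊕ VPair L)) :
    disjUnionInr K L ⁻¹' ↑(T.map (disjUnionEquiv K L).toEmbedding) = ↑T.toRight := by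
  ext r
  exact (Finset.mem_map' (disjUnionEquiv K L).toEmbedding).trans Finset.mem_toRight.symm

lemma isGVF_sDisjUnion_iff (S : Set (VPair (sDisjUnion K L))) :
    IsGVF S ↔ IsGVF (disjUnionInl K L ⁻¹' S) ∧ IsGVF (disjUnionInr K L ⁻¹' S) := by
  simp only [IsGVF, isDVF_sDisjUnion_iff, hasClosedPath_sDisjUnion_iff]
  tauto

end VPair

end DisjUnion

lemma isGVF_empty {V : Type*} {K : SComplex V} : IsGVF (∅ : Set (VPair K)) :=
  ⟨fun _ hp => hp.elim, fun ⟨_, _, _, hc, _⟩ => hc 0⟩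

lemma morseComplex_faces_or_eq_empty_iff {V : Type*} (K : SComplex V) (S : Finset (VPair K)) :
    (MorseComplex K).faces S ∨ S = ∅ ↔ IsGVF (S : Set (VPair K)) := by
  refine ⟨?_, fun h => S.eq_empty_or_nonempty.symm.imp (fun hS => ⟨hS, h⟩) id⟩
  rintro (h | rfl)
  exacts [h.2, by simpa using isGVF_empty]

lemma sJoin_faces_iff {V W : Type*} [DecidableEq V] [DecidableEq W] (K : SComplex V)
    (L : SComplex W) (T : Finset (V ⊕ W)) :
    (sJoin K L).faces T ↔ T.Nonempty ∧ (K.faces T.toLeft ∨ T.toLeft = ∅) ∧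
      (L.faces T.toRight ∨ T.toRight = ∅) := by
  constructor
  · rintro ⟨hne, τ, ⟨α, β, hα, hβ, rfl⟩, hsub⟩
    refine ⟨hne, K.faces_or_eq_empty_of_subset hα ?_, L.faces_or_eq_empty_of_subset hβ ?_⟩
    · intro x hx
      simpa using hsub (Finset.mem_toLeft.1 hx)
    · intro y hy
      simpa using hsub (Finset.mem_toRight.1 hy)
  · rintro ⟨hne, hl, hr⟩
    refine ⟨hne, _, ⟨T.toLeft, T.toRight, hl, hr, rfl⟩, ?_⟩
    rintro (x | y) h <;> simpa using h

lemma fimage_equiv {V W : Type*} (e : V ≃ W) (σ : Finset V) :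
    fimage e σ = σ.map e.toEmbedding := by
  unfold fimage
  exact (@Finset.map_eq_image _ _ (Classical.decEq W) e.toEmbedding σ).symm

def ComplexIso.ofEquiv {V W : Type*} {F : Finset V → Prop} {G : Finset W → Prop} (e : W ≃ V)
    (h : ∀ τ, F (τ.map e.toEmbedding) ↔ G τ) : ComplexIso F G where
  toFun := e.symm
  invFun := e
  left_inv x _ := e.apply_symm_apply x
  right_inv y _ := e.symm_apply_apply y
  map_face σ hσ := by
    rw [fimage_equiv e.symm, ← h]
    simpa [Finset.map_map] using hσ
  inv_face τ hτ := by
    rw [fimage_equiv e]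
    exact (h τ).2 hτ

theorem stmt_8_general {V W : Type*} [DecidableEq V] [DecidableEq W]
    (K : SComplex V) (L : SComplex W) :
    Nonempty (ComplexIso (MorseComplex (sDisjUnion K L)).faces
      (sJoin (MorseComplex K) (MorseComplex L)).faces) := by
  refine ⟨ComplexIso.ofEquiv (VPair.disjUnionEquiv K L) fun T => ?_⟩
  rw [sJoin_faces_iff, morseComplex_faces_or_eq_empty_iff, morseComplex_faces_or_eq_empty_iff,
    ← VPair.preimage_disjUnionInl_map_disjUnionEquiv,
    ← VPair.preimage_disjUnionInr_map_disjUnionEquiv, ← VPair.isGVF_sDisjUnion_iff]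
  exact and_congr_left' Finset.map_nonempty

/-- for disjoint `K`, `L`, each with at least one edge,
`M(K ⊔ L) = M(K) * M(L)`. -/
theorem stmt_8 {V W : Type*} [DecidableEq V] [DecidableEq W]
    (K : SComplex V) (L : SComplex W)
    (hK : ∃ σ, K.faces σ ∧ σ.card = 2) (hL : ∃ σ, L.faces σ ∧ σ.card = 2) :
    Nonempty (ComplexIso (MorseComplex (sDisjUnion K L)).faces
      (sJoin (MorseComplex K) (MorseComplex L)).faces) :=
  stmt_8_general K L
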